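/- arXiv:1506.06494 — 7 statements merged into one kernel-verified Lean document; each statement's English description precedes it below -/
import Mathlib

section
/- Let Ω be a bounded Lipschitz domain and α > 0. For every w ∈ L²(Ω), choosing f = w and u = 0 gives sup over (f,u) ∈ L²_α(Ω) × H²_α(Ω) of [(f,w)_{L²} + (−Δu + u, w)_{L²}] / (‖(f,u)‖_{L²_α×H²_α} ‖w‖_{L²_{α⁻¹}}) ≥ 1; i.e., the inf-sup constant of the constraint operator [M A] with respect to the α-weighted norms is at least 1, independently of α. -/
/-!
STATEMENT 0: inf-sup ≥ 1 for the constraint operator [M A] in α-weighted norms.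
Abstract model: `L2` plays the role of L²(Ω) (both control space and multiplier
space), `Hb` the role of H̄²(Ω) (with its norm being the H²-norm), `Bd` the role
of L²(∂Ω).  `A : Hb →L[ℝ] L2` represents u ↦ -Δu + u and `T : Hb →L[ℝ] Bd`
the trace operator.  The weighted norms are
‖f‖²_{L²_α} = α‖f‖², ‖u‖²_{H²_α} = α‖u‖²_{H²} + ‖Tu‖², ‖w‖²_{L²_{α⁻¹}} = α⁻¹‖w‖².
Choosing f = w, u = 0 realizes the value 1, hence the inf-sup constant is ≥ 1.
-/

open scoped RealInnerProductSpace

theorem stmt0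
    {L2 Hb Bd : Type*}
    [NormedAddCommGroup L2] [InnerProductSpace ℝ L2]
    [NormedAddCommGroup Hb] [InnerProductSpace ℝ Hb]
    [NormedAddCommGroup Bd] [InnerProductSpace ℝ Bd]
    (A : Hb →L[ℝ] L2) (T : Hb →L[ℝ] Bd)
    (α : ℝ) (hα : 0 < α) (w : L2) (hw : w ≠ 0) :
    1 ≤ (⟪w, w⟫ + ⟪A (0 : Hb), w⟫) /
      (Real.sqrt (α * ‖w‖ ^ 2 + α * ‖(0 : Hb)‖ ^ 2 + ‖T (0 : Hb)‖ ^ 2) *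
        Real.sqrt (α⁻¹ * ‖w‖ ^ 2)) := by
  have hwn : (0:ℝ) < ‖w‖ := norm_pos_iff.mpr hw
  simp only [map_zero, norm_zero, inner_zero_left, add_zero, mul_zero,
    real_inner_self_eq_norm_sq]
  rw [show α * ‖w‖ ^ 2 + α * 0 ^ 2 + 0 ^ 2 = α * ‖w‖ ^ 2 by ring,
    Real.sqrt_mul hα.le, Real.sqrt_mul (by positivity : (0:ℝ) ≤ α⁻¹)]
  rw [show Real.sqrt α * Real.sqrt (‖w‖ ^ 2) * (Real.sqrt α⁻¹ * Real.sqrt (‖w‖ ^ 2))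
      = (Real.sqrt α * Real.sqrt α⁻¹) * (Real.sqrt (‖w‖ ^ 2) * Real.sqrt (‖w‖ ^ 2)) by ring,
    ← Real.sqrt_mul hα.le, mul_inv_cancel₀ hα.ne', Real.sqrt_one,
    Real.mul_self_sqrt (by positivity), one_mul,
    div_self (by positivity : (‖w‖:ℝ) ^ 2 ≠ 0)]
end

section
/- Let V be a Hilbert space and A : V → V' a bounded self-adjoint operator satisfying the two-sided estimate c ≤ sup_{y≠0} ⟨Ax,y⟩/(‖x‖‖y‖) for all nonzero x, and ‖A‖_{L(V,V')} ≤ C. Then A is invertible with ‖A⁻¹‖_{L(V',V)} ≤ c⁻¹. -/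
/-!
The inf-sup condition says `c ‖x‖ ≤ ‖A x‖`, so `A` is injective with closed range. Transport `A`
through the Riesz isomorphism to an operator `B` on `V` with `⟪B x, y⟫ = A x y`. If `w` is orthogonal
to the range of `B`, then by symmetry `A w v = ⟪B v, w⟫ = 0` for all `v`, so `A w = 0` and `w = 0`;
hence `B`, and with it `A`, is onto. The lower bound then gives `‖A⁻¹‖ ≤ c⁻¹`.
-/

open InnerProductSpace

theorem mul_norm_le_norm_of_le_iSup_div {E : Type*} [NormedAddCommGroup E] [NormedSpace ℝ E]
    (φ : StrongDual ℝ E) {c : ℝ} {x : E} (hx : x ≠ 0)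
    (h : c ≤ ⨆ y : {y : E // y ≠ 0}, φ y / (‖x‖ * ‖(y : E)‖)) :
    c * ‖x‖ ≤ ‖φ‖ := by
  have hx' : 0 < ‖x‖ := norm_pos_iff.mpr hx
  have : Nonempty {y : E // y ≠ 0} := ⟨⟨x, hx⟩⟩
  have hsup : (⨆ y : {y : E // y ≠ 0}, φ y / (‖x‖ * ‖(y : E)‖)) ≤ ‖φ‖ / ‖x‖ := by
    refine ciSup_le fun ⟨y, hy⟩ => ?_
    rw [div_le_div_iff₀ (by positivity) hx', mul_comm ‖x‖, ← mul_assoc]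
    gcongr
    exact (le_abs_self _).trans (φ.le_opNorm y)
  exact (le_div_iff₀ hx').mp (h.trans hsup)

theorem ContinuousLinearEquiv.norm_symm_le_inv {𝕜 E F : Type*} [NontriviallyNormedField 𝕜]
    [NormedAddCommGroup E] [NormedSpace 𝕜 E] [NormedAddCommGroup F] [NormedSpace 𝕜 F]
    (e : E ≃L[𝕜] F) {c : ℝ} (hc : 0 < c) (h : ∀ x, c * ‖x‖ ≤ ‖e x‖) :
    ‖(e.symm : F →L[𝕜] E)‖ ≤ c⁻¹ :=
  ContinuousLinearMap.opNorm_le_bound _ (inv_nonneg.mpr hc.le) fun y => by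
    rw [inv_mul_eq_div, le_div_iff₀' hc]
    simpa using h (e.symm y)

theorem bijective_of_symm_of_mul_norm_le {V : Type*} [NormedAddCommGroup V]
    [InnerProductSpace ℝ V] [CompleteSpace V] (A : V →L[ℝ] StrongDual ℝ V)
    (hsym : ∀ x y, A x y = A y x) {c : ℝ} (hc : 0 < c) (hA : ∀ x, c * ‖x‖ ≤ ‖A x‖) :
    Function.Bijective A := by
  set B := continuousLinearMapOfBilin (𝕜 := ℝ) A
  have hAB : ⇑A = toDual ℝ V ∘ B := funext fun x => ((toDual ℝ V).apply_symm_apply (A x)).symm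
  have hB : ∀ x, c * ‖x‖ ≤ ‖B x‖ := fun x => by
    rw [show ‖B x‖ = ‖A x‖ from (toDual ℝ V).symm.norm_map (A x)]
    exact hA x
  rw [hAB, (toDual ℝ V).bijective.of_comp_iff', B.bijective_iff_dense_range_and_antilipschitz]
  refine ⟨?_, antilipschitzWith_iff_exists_mul_le_norm.mpr ⟨c, hc, hB⟩⟩
  rw [Submodule.topologicalClosure_eq_top_iff, Submodule.eq_bot_iff]
  intro w hw
  have hAw : A w = 0 := ContinuousLinearMap.ext fun v => by
    rw [hsym, ← continuousLinearMapOfBilin_apply]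
    exact hw (B v) ⟨v, rfl⟩
  have := hA w
  rw [hAw, norm_zero] at this
  exact norm_le_zero_iff.mp (nonpos_of_mul_nonpos_right this hc)

theorem stmt9_general
    {V : Type*} [NormedAddCommGroup V] [InnerProductSpace ℝ V] [CompleteSpace V]
    (A : V →L[ℝ] StrongDual ℝ V)
    (hsym : ∀ x y : V, A x y = A y x)
    (c : ℝ) (hc : 0 < c)
    (hinfsup : ∀ x : V, x ≠ 0 → c ≤ ⨆ y : {y : V // y ≠ 0}, A x y / (‖x‖ * ‖(y : V)‖)) :
    ∃ Ainv : StrongDual ℝ V →L[ℝ] V,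
      (∀ x : V, Ainv (A x) = x) ∧
      (∀ φ : StrongDual ℝ V, A (Ainv φ) = φ) ∧
      ‖Ainv‖ ≤ c⁻¹ := by
  have hA : ∀ x, c * ‖x‖ ≤ ‖A x‖ := fun x => by
    rcases eq_or_ne x 0 with rfl | hx
    · simp
    · exact mul_norm_le_norm_of_le_iSup_div (A x) hx (hinfsup x hx)
  obtain ⟨hinj, hsurj⟩ := bijective_of_symm_of_mul_norm_le A hsym hc hA
  let e := ContinuousLinearEquiv.ofBijective A (LinearMap.ker_eq_bot.mpr hinj)
    (LinearMap.range_eq_top.mpr hsurj)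
  exact ⟨e.symm, e.symm_apply_apply, e.apply_symm_apply, e.norm_symm_le_inv hc hA⟩

theorem stmt9
    {V : Type*} [NormedAddCommGroup V] [InnerProductSpace ℝ V] [CompleteSpace V]
    (A : V →L[ℝ] StrongDual ℝ V)
    (hsym : ∀ x y : V, A x y = A y x)
    (c C : ℝ) (hc : 0 < c)
    (hinfsup : ∀ x : V, x ≠ 0 → c ≤ ⨆ y : {y : V // y ≠ 0}, A x y / (‖x‖ * ‖(y : V)‖))
    (hbound : ‖A‖ ≤ C) :
    ∃ Ainv : StrongDual ℝ V →L[ℝ] V,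
      (∀ x : V, Ainv (A x) = x) ∧
      (∀ φ : StrongDual ℝ V, A (Ainv φ) = φ) ∧
      ‖Ainv‖ ≤ c⁻¹ :=
  stmt9_general A hsym c hc hinfsup
end

section
/- Brezzi saddle-point well-posedness applied to the abstract KKT operator: let W, U, O be Hilbert spaces, A : U → W' bounded with closed range and ‖u‖_{U/ker A} ≤ c₁‖Au‖_{W'}, and T : U → O bounded with ‖u‖_U ≤ c₂‖Tu‖_O on ker A. Then for every α > 0 the block operator A_α = [[αM, 0, M'], [0, K, A'], [M, A, 0]] : V → V', where V = W_α × U_α × W_{α⁻¹}, satisfies c ≤ sup_{y≠0} ⟨A_α x, y⟩/(‖x‖_V‖y‖_V) ≤ C for all nonzero x, with constants c, C > 0 independent of α. -/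
/-!
The duals W', U' are identified with W, U through the Riesz maps, so M is the identity, K is
represented by the form (Tu, Tv), and A_α by the bilinear form `kktForm`; `kktVnorm` is the norm
of V = W_α × U_α × W_{α⁻¹}.

Since the U_α-norm contains α‖Au‖², the constraint is inf-sup stable with constant 1 and the
Brezzi conditions can be verified in one stroke: for x = (f, u, w) the test vector
y = (f + (2α)⁻¹ w, u, (α/2)(f + Au) − w) satisfies ‖x‖²_V ≤ 4⟨A_α x, y⟩ (Young's inequality
absorbs the cross term ⟨f, w⟩) and ‖y‖²_V ≤ 3‖x‖²_V, so c = 1/7 works. The bound C = 6 is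
Cauchy–Schwarz on each of the six terms of the form, the weights α and α⁻¹ pairing off.
-/

open scoped RealInnerProductSpace

section

variable {W U O : Type*}
  [NormedAddCommGroup W] [InnerProductSpace ℝ W]
  [NormedAddCommGroup U] [InnerProductSpace ℝ U]
  [NormedAddCommGroup O] [InnerProductSpace ℝ O]

/-- The weighted norm on V = W_α × U_α × W_{α⁻¹}. -/
noncomputable def kktVnorm (α : ℝ) (A : U →L[ℝ] W) (T : U →L[ℝ] O)
    (x : W × U × W) : ℝ :=
  Real.sqrt (α * ‖x.1‖ ^ 2 + (α * ‖A x.2.1‖ ^ 2 + ‖T x.2.1‖ ^ 2) +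
    α⁻¹ * ‖x.2.2‖ ^ 2)

/-- The bilinear form ⟨A_α x, y⟩ of the KKT block operator
[[αM,0,M'],[0,K,A'],[M,A,0]]. -/
noncomputable def kktForm (α : ℝ) (A : U →L[ℝ] W) (T : U →L[ℝ] O)
    (x y : W × U × W) : ℝ :=
  α * ⟪x.1, y.1⟫ + ⟪T x.2.1, T y.2.1⟫ + ⟪x.1, y.2.2⟫ + ⟪A x.2.1, y.2.2⟫ +
    ⟪y.1, x.2.2⟫ + ⟪A y.2.1, x.2.2⟫

lemma norm_add_sq_le_two_mul {E : Type*} [SeminormedAddCommGroup E] (a b : E) :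
    ‖a + b‖ ^ 2 ≤ 2 * (‖a‖ ^ 2 + ‖b‖ ^ 2) :=
  (pow_le_pow_left₀ (norm_nonneg _) (norm_add_le a b) 2).trans add_sq_le

lemma norm_sub_sq_le_two_mul {E : Type*} [SeminormedAddCommGroup E] (a b : E) :
    ‖a - b‖ ^ 2 ≤ 2 * (‖a‖ ^ 2 + ‖b‖ ^ 2) :=
  (pow_le_pow_left₀ (norm_nonneg _) (norm_sub_le a b) 2).trans add_sq_le

section InnerProduct

variable {E : Type*} [NormedAddCommGroup E] [InnerProductSpace ℝ E]

lemma mul_real_inner_le_mul_of_sq_le {a b : E} {r s t p q : ℝ} (hr : r ^ 2 = s * t)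
    (ht : 0 ≤ t) (hp : 0 ≤ p) (hq : 0 ≤ q) (ha : s * ‖a‖ ^ 2 ≤ p ^ 2)
    (hb : t * ‖b‖ ^ 2 ≤ q ^ 2) : r * ⟪a, b⟫ ≤ p * q := by
  have hsq : (|r| * (‖a‖ * ‖b‖)) ^ 2 ≤ (p * q) ^ 2 := by
    calc (|r| * (‖a‖ * ‖b‖)) ^ 2 = (s * ‖a‖ ^ 2) * (t * ‖b‖ ^ 2) := by
          rw [mul_pow, sq_abs, hr]; ring
      _ ≤ p ^ 2 * q ^ 2 := mul_le_mul ha hb (by positivity) (sq_nonneg p)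
      _ = (p * q) ^ 2 := (mul_pow p q 2).symm
  calc r * ⟪a, b⟫ ≤ |r * ⟪a, b⟫| := le_abs_self _
    _ ≤ |r| * (‖a‖ * ‖b‖) := by rw [abs_mul]; gcongr; exact abs_real_inner_le_norm a b
    _ ≤ p * q := le_of_pow_le_pow_left₀ two_ne_zero (by positivity) hsq

lemma neg_two_mul_real_inner_le {α : ℝ} (hα : 0 < α) (a b : E) :
    -(2 * ⟪a, b⟫) ≤ α * ‖a‖ ^ 2 + α⁻¹ * ‖b‖ ^ 2 := by
  have h : α⁻¹ * ‖α • a + b‖ ^ 2 = α * ‖a‖ ^ 2 + 2 * ⟪a, b⟫ + α⁻¹ * ‖b‖ ^ 2 := by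
    rw [norm_add_sq_real, norm_smul, real_inner_smul_left, Real.norm_of_nonneg hα.le]
    field_simp
  linarith [show 0 ≤ α⁻¹ * ‖α • a + b‖ ^ 2 by positivity]

end InnerProduct

lemma kktVnorm_sq {α : ℝ} (hα : 0 ≤ α) (A : U →L[ℝ] W) (T : U →L[ℝ] O) (x : W × U × W) :
    kktVnorm α A T x ^ 2 =
      α * ‖x.1‖ ^ 2 + (α * ‖A x.2.1‖ ^ 2 + ‖T x.2.1‖ ^ 2) + α⁻¹ * ‖x.2.2‖ ^ 2 :=
  Real.sq_sqrt (by positivity)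

lemma kktVnorm_nonneg (α : ℝ) (A : U →L[ℝ] W) (T : U →L[ℝ] O) (x : W × U × W) :
    0 ≤ kktVnorm α A T x :=
  Real.sqrt_nonneg _

lemma le_kktVnorm_sq {α : ℝ} (hα : 0 < α) (A : U →L[ℝ] W) (T : U →L[ℝ] O) (x : W × U × W) :
    α * ‖x.1‖ ^ 2 ≤ kktVnorm α A T x ^ 2 ∧ α * ‖A x.2.1‖ ^ 2 ≤ kktVnorm α A T x ^ 2 ∧
      ‖T x.2.1‖ ^ 2 ≤ kktVnorm α A T x ^ 2 ∧ α⁻¹ * ‖x.2.2‖ ^ 2 ≤ kktVnorm α A T x ^ 2 := by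
  have h₁ : 0 ≤ α * ‖x.1‖ ^ 2 := by positivity
  have h₂ : 0 ≤ α * ‖A x.2.1‖ ^ 2 := by positivity
  have h₃ : 0 ≤ ‖T x.2.1‖ ^ 2 := by positivity
  have h₄ : 0 ≤ α⁻¹ * ‖x.2.2‖ ^ 2 := by positivity
  rw [kktVnorm_sq hα.le]
  refine ⟨?_, ?_, ?_, ?_⟩ <;> linarith

lemma kktForm_le_mul_kktVnorm {α : ℝ} (hα : 0 < α) (A : U →L[ℝ] W) (T : U →L[ℝ] O)
    (x y : W × U × W) :
    kktForm α A T x y ≤ 6 * (kktVnorm α A T x * kktVnorm α A T y) := by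
  obtain ⟨f, u, w⟩ := x
  obtain ⟨g, v, z⟩ := y
  obtain ⟨hf, hAu, hTu, hw⟩ := le_kktVnorm_sq hα A T (f, u, w)
  obtain ⟨hg, hAv, hTv, hz⟩ := le_kktVnorm_sq hα A T (g, v, z)
  have hp := kktVnorm_nonneg α A T (f, u, w)
  have hq := kktVnorm_nonneg α A T (g, v, z)
  have hαα : (1 : ℝ) ^ 2 = α * α⁻¹ := by rw [one_pow, mul_inv_cancel₀ hα.ne']
  have hα'α : (1 : ℝ) ^ 2 = α⁻¹ * α := by rw [one_pow, inv_mul_cancel₀ hα.ne']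
  have hα' : 0 ≤ α⁻¹ := by positivity
  have t₁ := mul_real_inner_le_mul_of_sq_le (sq α) hα.le hp hq hf hg
  have t₂ := mul_real_inner_le_mul_of_sq_le (by norm_num : (1 : ℝ) ^ 2 = 1 * 1) zero_le_one
    hp hq (by rwa [one_mul]) (by rwa [one_mul] : 1 * ‖T v‖ ^ 2 ≤ _)
  have t₃ := mul_real_inner_le_mul_of_sq_le hαα hα' hp hq hf hz
  have t₄ := mul_real_inner_le_mul_of_sq_le hαα hα' hp hq hAu hz
  have t₅ := mul_real_inner_le_mul_of_sq_le hα'α hα.le hp hq hw hg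
  have t₆ := mul_real_inner_le_mul_of_sq_le hα'α hα.le hp hq hw hAv
  rw [one_mul] at t₂ t₃ t₄ t₅ t₆
  rw [real_inner_comm] at t₅ t₆
  simp only [kktForm]
  linarith

lemma kktVnorm_pos {α c : ℝ} (hα : 0 < α) {A : U →L[ℝ] W} {T : U →L[ℝ] O}
    (hT : ∀ u : U, A u = 0 → ‖u‖ ≤ c * ‖T u‖) {x : W × U × W} (hx : x ≠ 0) :
    0 < kktVnorm α A T x := by
  refine (kktVnorm_nonneg α A T x).lt_of_ne fun h ↦ hx ?_
  obtain ⟨hf, hAu, hTu, hw⟩ := le_kktVnorm_sq hα A T x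
  rw [← h, zero_pow two_ne_zero] at hf hAu hTu hw
  have hf' : x.1 = 0 := by simpa using nonpos_of_mul_nonpos_right hf hα
  have hAu' : A x.2.1 = 0 := by simpa using nonpos_of_mul_nonpos_right hAu hα
  have hw' : x.2.2 = 0 := by simpa using nonpos_of_mul_nonpos_right hw (inv_pos.2 hα)
  have hu : x.2.1 = 0 := by
    have hTu' : T x.2.1 = 0 := by simpa using hTu
    simpa [hTu'] using hT _ hAu'
  exact Prod.ext hf' (Prod.ext hu hw')

noncomputable def kktTestVector (α : ℝ) (A : U →L[ℝ] W) (x : W × U × W) : W × U × W :=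
  (x.1 + (2 * α)⁻¹ • x.2.2, x.2.1, (α / 2) • (x.1 + A x.2.1) - x.2.2)

lemma kktForm_kktTestVector {α : ℝ} (hα : α ≠ 0) (A : U →L[ℝ] W) (T : U →L[ℝ] O)
    (x : W × U × W) :
    kktForm α A T x (kktTestVector α A x) =
      α * ‖x.1‖ ^ 2 + ‖T x.2.1‖ ^ 2 + (⟪x.1, x.2.2⟫ + α⁻¹ * ‖x.2.2‖ ^ 2) / 2 +
        α / 2 * ‖x.1 + A x.2.1‖ ^ 2 := by
  obtain ⟨f, u, w⟩ := x
  simp only [kktForm, kktTestVector, inner_add_left, inner_add_right, inner_sub_right,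
    real_inner_smul_left, real_inner_smul_right, real_inner_self_eq_norm_sq, norm_add_sq_real]
  rw [real_inner_comm (A u) f]
  field_simp
  ring

lemma kktVnorm_sq_le_four_mul_kktForm_kktTestVector {α : ℝ} (hα : 0 < α) (A : U →L[ℝ] W)
    (T : U →L[ℝ] O) (x : W × U × W) :
    kktVnorm α A T x ^ 2 ≤ 4 * kktForm α A T x (kktTestVector α A x) := by
  obtain ⟨f, u, w⟩ := x
  rw [kktForm_kktTestVector hα.ne', kktVnorm_sq hα.le]
  have young := neg_two_mul_real_inner_le hα f w
  have hAu : α * ‖A u‖ ^ 2 ≤ α * (2 * (‖f + A u‖ ^ 2 + ‖f‖ ^ 2)) := by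
    gcongr
    simpa using norm_sub_sq_le_two_mul (f + A u) f
  have : 0 ≤ α⁻¹ * ‖w‖ ^ 2 := by positivity
  dsimp only
  linarith [sq_nonneg ‖T u‖]

lemma kktVnorm_kktTestVector_sq_le {α : ℝ} (hα : 0 < α) (A : U →L[ℝ] W) (T : U →L[ℝ] O)
    (x : W × U × W) :
    kktVnorm α A T (kktTestVector α A x) ^ 2 ≤ 3 * kktVnorm α A T x ^ 2 := by
  obtain ⟨f, u, w⟩ := x
  rw [kktVnorm_sq hα.le, kktVnorm_sq hα.le]
  have h₁ : α * ‖f + (2 * α)⁻¹ • w‖ ^ 2 ≤ 2 * α * ‖f‖ ^ 2 + α⁻¹ / 2 * ‖w‖ ^ 2 :=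
    calc α * ‖f + (2 * α)⁻¹ • w‖ ^ 2 ≤ α * (2 * (‖f‖ ^ 2 + ‖(2 * α)⁻¹ • w‖ ^ 2)) := by
          gcongr; exact norm_add_sq_le_two_mul _ _
      _ = 2 * α * ‖f‖ ^ 2 + α⁻¹ / 2 * ‖w‖ ^ 2 := by
          rw [norm_smul, Real.norm_of_nonneg (by positivity)]
          field_simp
  have h₂ : α⁻¹ * ‖(α / 2) • (f + A u) - w‖ ^ 2 ≤
      α * ‖f‖ ^ 2 + α * ‖A u‖ ^ 2 + 2 * α⁻¹ * ‖w‖ ^ 2 :=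
    calc α⁻¹ * ‖(α / 2) • (f + A u) - w‖ ^ 2
        ≤ α⁻¹ * (2 * (‖(α / 2) • (f + A u)‖ ^ 2 + ‖w‖ ^ 2)) := by
          gcongr; exact norm_sub_sq_le_two_mul _ _
      _ = α / 2 * ‖f + A u‖ ^ 2 + 2 * α⁻¹ * ‖w‖ ^ 2 := by
          rw [norm_smul, Real.norm_of_nonneg (by positivity)]
          field_simp
      _ ≤ α / 2 * (2 * (‖f‖ ^ 2 + ‖A u‖ ^ 2)) + 2 * α⁻¹ * ‖w‖ ^ 2 := by
          gcongr; exact norm_add_sq_le_two_mul _ _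
      _ = α * ‖f‖ ^ 2 + α * ‖A u‖ ^ 2 + 2 * α⁻¹ * ‖w‖ ^ 2 := by ring
  have : 0 ≤ α * ‖A u‖ ^ 2 := by positivity
  have : 0 ≤ α⁻¹ * ‖w‖ ^ 2 := by positivity
  simp only [kktTestVector]
  linarith [sq_nonneg ‖T u‖]

lemma kktForm_div_le_six {α : ℝ} (hα : 0 < α) (A : U →L[ℝ] W) (T : U →L[ℝ] O)
    (x y : W × U × W) :
    kktForm α A T x y / (kktVnorm α A T x * kktVnorm α A T y) ≤ 6 :=
  div_le_of_le_mul₀ (mul_nonneg (kktVnorm_nonneg α A T x) (kktVnorm_nonneg α A T y))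
    (by norm_num) (kktForm_le_mul_kktVnorm hα A T x y)

lemma kktVnorm_kktTestVector_pos {α c : ℝ} (hα : 0 < α) {A : U →L[ℝ] W} {T : U →L[ℝ] O}
    (hT : ∀ u : U, A u = 0 → ‖u‖ ≤ c * ‖T u‖) {x : W × U × W} (hx : x ≠ 0) :
    0 < kktVnorm α A T (kktTestVector α A x) := by
  have hNx := kktVnorm_pos hα hT hx
  have hlow := kktVnorm_sq_le_four_mul_kktForm_kktTestVector hα A T x
  have hup := kktForm_le_mul_kktVnorm hα A T x (kktTestVector α A x)
  refine (kktVnorm_nonneg α A T _).lt_of_ne fun h ↦ ?_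
  rw [← h, mul_zero, mul_zero] at hup
  linarith [pow_pos hNx 2]

lemma one_div_seven_le_kktForm_kktTestVector_div {α c : ℝ} (hα : 0 < α) {A : U →L[ℝ] W}
    {T : U →L[ℝ] O} (hT : ∀ u : U, A u = 0 → ‖u‖ ≤ c * ‖T u‖) {x : W × U × W} (hx : x ≠ 0) :
    1 / 7 ≤ kktForm α A T x (kktTestVector α A x) /
      (kktVnorm α A T x * kktVnorm α A T (kktTestVector α A x)) := by
  have hNx := kktVnorm_pos hα hT hx
  have hNy := kktVnorm_kktTestVector_pos hα hT hx
  have hlow := kktVnorm_sq_le_four_mul_kktForm_kktTestVector hα A T x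
  have hNy_le : kktVnorm α A T (kktTestVector α A x) ≤ 7 / 4 * kktVnorm α A T x := by
    refine le_of_pow_le_pow_left₀ two_ne_zero (by positivity) ?_
    nlinarith [kktVnorm_kktTestVector_sq_le hα A T x]
  rw [le_div_iff₀ (by positivity)]
  nlinarith [mul_le_mul_of_nonneg_left hNy_le hNx.le]

theorem stmt11_general (A : U →L[ℝ] W) (T : U →L[ℝ] O) (c₂ : ℝ)
    (hT : ∀ u : U, A u = 0 → ‖u‖ ≤ c₂ * ‖T u‖) :
    ∃ c C : ℝ, 0 < c ∧ 0 < C ∧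
      ∀ α : ℝ, 0 < α → ∀ x : W × U × W, x ≠ 0 →
        c ≤ (⨆ y : {y : W × U × W // y ≠ 0},
              kktForm α A T x (y : W × U × W) /
                (kktVnorm α A T x * kktVnorm α A T (y : W × U × W))) ∧
        (⨆ y : {y : W × U × W // y ≠ 0},
              kktForm α A T x (y : W × U × W) /
                (kktVnorm α A T x * kktVnorm α A T (y : W × U × W))) ≤ C := by
  refine ⟨1 / 7, 6, by norm_num, by norm_num, fun α hα x hx ↦ ?_⟩
  have : Nonempty {y : W × U × W // y ≠ 0} := ⟨⟨x, hx⟩⟩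
  have hle : ∀ y : {y : W × U × W // y ≠ 0},
      kktForm α A T x y / (kktVnorm α A T x * kktVnorm α A T y) ≤ 6 :=
    fun y ↦ kktForm_div_le_six hα A T x y
  have hy₀ : kktTestVector α A x ≠ 0 := fun h ↦
    (kktVnorm_kktTestVector_pos hα hT hx).ne' (by simp [h, kktVnorm])
  exact ⟨(one_div_seven_le_kktForm_kktTestVector_div hα hT hx).trans
      (le_ciSup ⟨6, Set.forall_mem_range.2 hle⟩ ⟨_, hy₀⟩), ciSup_le hle⟩

theorem stmt11 (A : U →L[ℝ] W) (T : U →L[ℝ] O) (c₁ c₂ : ℝ)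
    (hA : ∀ u : U, (⨅ v : LinearMap.ker (A : U →ₗ[ℝ] W), ‖u - (v : U)‖) ≤ c₁ * ‖A u‖)
    (hT : ∀ u : U, A u = 0 → ‖u‖ ≤ c₂ * ‖T u‖) :
    ∃ c C : ℝ, 0 < c ∧ 0 < C ∧
      ∀ α : ℝ, 0 < α → ∀ x : W × U × W, x ≠ 0 →
        c ≤ (⨆ y : {y : W × U × W // y ≠ 0},
              kktForm α A T x (y : W × U × W) /
                (kktVnorm α A T x * kktVnorm α A T (y : W × U × W))) ∧
        (⨆ y : {y : W × U × W // y ≠ 0},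
              kktForm α A T x (y : W × U × W) /
                (kktVnorm α A T x * kktVnorm α A T (y : W × U × W))) ≤ C :=
  stmt11_general A T c₂ hT

end
end

section
/- Discrete coercivity inheritance: let U_h ⊂ H̄²(Ω) and W_h ⊂ L²(Ω) be finite-dimensional subspaces with (1−Δ)U_h ⊂ W_h. If (f_h, u_h) ∈ W_h × U_h satisfies (f_h, φ_h)_{L²} + (u_h − Δu_h, φ_h)_{L²} = 0 for all φ_h ∈ W_h, then f_h + (1−Δ)u_h = 0 exactly, and hence α‖f_h‖²_{L²(Ω)} + ‖u_h‖²_{L²(∂Ω)} ≥ c₂ (α‖f_h‖²_{L²} + α‖u_h‖²_{H²} + ‖u_h‖²_{L²(∂Ω)}) with the same constant c₂ as in the continuous coercivity estimate. -/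
/-!
STATEMENT 12: discrete coercivity inheritance.  Abstract model: `L2` = L²(Ω),
`U` = H̄²(Ω) (norm = H²-norm), `Bd` = L²(∂Ω) with trace `T`; `L : U →L[ℝ] L2`
represents (1-Δ), with elliptic regularity constant c₁ (‖u‖_{H²} ≤ c₁‖(1-Δ)u‖).
`Uh`, `Wh` are (finite-dimensional) subspaces with (1-Δ)Uh ⊂ Wh.  If
(f_h,u_h) ∈ Wh × Uh satisfies the discrete constraint against all test
functions in Wh, then f_h + (1-Δ)u_h = 0 exactly, and the coercivity estimate
holds with the continuous constant c₂ = 1/(1+c₁²).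
-/

open scoped RealInnerProductSpace

theorem stmt12
    {L2 U Bd : Type*}
    [NormedAddCommGroup L2] [InnerProductSpace ℝ L2]
    [NormedAddCommGroup U] [InnerProductSpace ℝ U]
    [NormedAddCommGroup Bd] [InnerProductSpace ℝ Bd]
    (L : U →L[ℝ] L2) (T : U →L[ℝ] Bd) (c₁ : ℝ)
    (hreg : ∀ u : U, ‖u‖ ≤ c₁ * ‖L u‖)
    (Uh : Submodule ℝ U) (Wh : Submodule ℝ L2) [FiniteDimensional ℝ Uh]
    [FiniteDimensional ℝ Wh]
    (hincl : ∀ u ∈ Uh, L u ∈ Wh)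
    (α : ℝ) (hα : 0 < α)
    (fh : L2) (uh : U) (hfh : fh ∈ Wh) (huh : uh ∈ Uh)
    (hconstr : ∀ φ ∈ Wh, ⟪fh, φ⟫ + ⟪L uh, φ⟫ = 0) :
    fh + L uh = 0 ∧
    α * ‖fh‖ ^ 2 + ‖T uh‖ ^ 2 ≥
      (1 / (1 + c₁ ^ 2)) * (α * ‖fh‖ ^ 2 + α * ‖uh‖ ^ 2 + ‖T uh‖ ^ 2) := by
  have hsum : fh + L uh = 0 := by
    have hmem : fh + L uh ∈ Wh := Wh.add_mem hfh (hincl uh huh)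
    have h0 : ⟪fh + L uh, fh + L uh⟫ = 0 := by
      rw [inner_add_left]; exact hconstr _ hmem
    exact inner_self_eq_zero.mp h0
  refine ⟨hsum, ?_⟩
  have hfl : ‖fh‖ = ‖L uh‖ := by
    have : fh = -(L uh) := by linear_combination (norm := abel_nf) hsum
    rw [this, norm_neg]
  have hu : ‖uh‖ ^ 2 ≤ c₁ ^ 2 * ‖fh‖ ^ 2 := by
    rw [hfl]
    have h1 := hreg uh
    have := mul_self_nonneg (c₁ * ‖L uh‖ - ‖uh‖)
    nlinarith [norm_nonneg uh, norm_nonneg (L uh)]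
  have hc : (0:ℝ) < 1 + c₁ ^ 2 := by positivity
  rw [ge_iff_le, div_mul_eq_mul_div, div_le_iff₀ hc]
  nlinarith [sq_nonneg ‖T uh‖, sq_nonneg ‖fh‖, sq_nonneg c₁, norm_nonneg (T uh)]
end

section
/- Eigenvalue localization for the preconditioned KKT operator: let M, K, R be linear operators on finite-dimensional Hilbert spaces with M self-adjoint positive definite, K self-adjoint positive semi-definite, K + R positive definite, and R = A'M⁻¹A for a linear operator A. Define p(λ)=1−λ, q(λ)=1+λp(λ), r(λ)=p(λ)−λq(λ). Let q₁<q₂ be the roots of q and r₁<r₂<r₃ the roots of r. Then for every α > 0, every eigenvalue λ of the generalized eigenvalue problem A_α x = λ B_α⁻¹ x, with A_α = [[αM,0,M'],[0,K,A'],[M,A,0]] and B_α⁻¹ = diag(αM, K+αR, α⁻¹M), lies in [r₁,q₁] ∪ [r₂,1] ∪ [q₂,r₃]. -/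
/-!
STATEMENT 14: eigenvalue localization for the preconditioned KKT operator.
Finite-dimensional Hilbert spaces W, U; duals identified via the inner
products, so M, Minv : W → W, K : U → U, A : U → W, A' = adjoint of A, and
R = A' M⁻¹ A.  Assumptions (B1)-(B3): M self-adjoint positive definite,
K self-adjoint positive semi-definite, K + R positive definite.  p(λ)=1-λ,
q(λ)=1+λp(λ)=1+λ-λ², r(λ)=p(λ)-λq(λ)=1-2λ-λ²+λ³; q₁<q₂ are the roots of q and
r₁<r₂<r₃ the roots of r.  Every generalized eigenvalue λ of
A_α x = λ B_α⁻¹ x, A_α = [[αM,0,M'],[0,K,A'],[M,A,0]],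
B_α⁻¹ = diag(αM, K+αR, α⁻¹M), lies in [r₁,q₁] ∪ [r₂,1] ∪ [q₂,r₃].
-/

open scoped RealInnerProductSpace

set_option maxHeartbeats 1000000 in
private lemma stmt14_sign (q₁ q₂ r₁ r₂ r₃ lam : ℝ)
    (hq₁ : q₁ = (1 - Real.sqrt 5) / 2) (hq₂ : q₂ = (1 + Real.sqrt 5) / 2)
    (hr₁₂ : r₁ < r₂) (hr₂₃ : r₂ < r₃)
    (hroot₁ : 1 - 2 * r₁ - r₁ ^ 2 + r₁ ^ 3 = 0)
    (hroot₂ : 1 - 2 * r₂ - r₂ ^ 2 + r₂ ^ 3 = 0)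
    (hroot₃ : 1 - 2 * r₃ - r₃ ^ 2 + r₃ ^ 3 = 0)
    (hm1 : r₁ ≤ lam → q₁ < lam) (hm2 : r₂ ≤ lam → 1 < lam)
    (hm3 : q₂ ≤ lam → r₃ < lam) :
    0 < ((1 + lam - lam ^ 2) * (1 - lam)) * (1 - 2 * lam - lam ^ 2 + lam ^ 3) := by
  have h5 : Real.sqrt 5 ^ 2 = 5 := Real.sq_sqrt (by norm_num)
  have hs5 : 1 < Real.sqrt 5 := by nlinarith [Real.sqrt_nonneg 5]
  have hqsum : q₁ + q₂ = 1 := by rw [hq₁, hq₂]; ring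
  have hqprod : q₁ * q₂ = -1 := by rw [hq₁, hq₂]; linear_combination (-(1:ℝ)/4) * h5
  have hq1zero : 1 + q₁ - q₁ ^ 2 = 0 := by rw [hq₁]; linear_combination (-(1:ℝ)/4) * h5
  have hq2zero : 1 + q₂ - q₂ ^ 2 = 0 := by rw [hq₂]; linear_combination (-(1:ℝ)/4) * h5
  have hq1neg : q₁ < 0 := by rw [hq₁]; linarith
  have hq2gt1 : 1 < q₂ := by rw [hq₂]; linarith
  have h12 : r₁ ^ 2 + r₁ * r₂ + r₂ ^ 2 - r₁ - r₂ - 2 = 0 := by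
    have h : (r₁ - r₂) * (r₁ ^ 2 + r₁ * r₂ + r₂ ^ 2 - r₁ - r₂ - 2) = 0 := by
      linear_combination hroot₁ - hroot₂
    exact (mul_eq_zero.mp h).resolve_left (sub_ne_zero.mpr (ne_of_lt hr₁₂))
  have h13 : r₁ ^ 2 + r₁ * r₃ + r₃ ^ 2 - r₁ - r₃ - 2 = 0 := by
    have h : (r₁ - r₃) * (r₁ ^ 2 + r₁ * r₃ + r₃ ^ 2 - r₁ - r₃ - 2) = 0 := by
      linear_combination hroot₁ - hroot₃
    exact (mul_eq_zero.mp h).resolve_left (sub_ne_zero.mpr (ne_of_lt (hr₁₂.trans hr₂₃)))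
  have hs1 : r₁ + r₂ + r₃ = 1 := by
    have h : (r₂ - r₃) * (r₁ + r₂ + r₃ - 1) = 0 := by linear_combination h12 - h13
    have := (mul_eq_zero.mp h).resolve_left (sub_ne_zero.mpr (ne_of_lt hr₂₃))
    linarith
  have hs2 : r₁ * r₂ + r₁ * r₃ + r₂ * r₃ = -2 := by
    linear_combination (r₁ + r₂) * hs1 - h12
  have hs3 : r₁ * r₂ * r₃ = -1 := by
    linear_combination r₁ * hs2 - r₁ ^ 2 * hs1 + hroot₁
  have hfact : ∀ x : ℝ, 1 - 2 * x - x ^ 2 + x ^ 3 = (x - r₁) * ((x - r₂) * (x - r₃)) := by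
    intro x; linear_combination x ^ 2 * hs1 - x * hs2 + hs3
  have hqfact : ∀ x : ℝ, 1 + x - x ^ 2 = -((q₁ - x) * (q₂ - x)) := by
    intro x; linear_combination hqprod - x * hqsum
  have hr21 : r₂ < 1 := by
    by_contra hcon
    push_neg at hcon
    have h1 := hfact 1
    have hprod : 0 ≤ (r₂ - 1) * (r₃ - 1) := mul_nonneg (by linarith) (by linarith)
    have hr1 : r₁ ≤ -1 := by linarith
    nlinarith [h1, hprod, hr1]
  have hvq1 : (q₁ - r₁) * ((q₁ - r₂) * (q₁ - r₃)) = 1 - q₁ := by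
    rw [← hfact q₁]; linear_combination (-q₁) * hq1zero
  have hvq2 : (q₂ - r₁) * ((q₂ - r₂) * (q₂ - r₃)) = 1 - q₂ := by
    rw [← hfact q₂]; linear_combination (-q₂) * hq2zero
  have hr1q1 : r₁ < q₁ := by
    by_contra hcon
    push_neg at hcon
    have hp23 : 0 < (r₂ - q₁) * (r₃ - q₁) := mul_pos (by linarith) (by linarith)
    nlinarith [hvq1, hp23]
  have hq1r2 : q₁ < r₂ := by
    by_contra hcon
    push_neg at hcon
    have hr20 : r₂ < 0 := lt_of_le_of_lt hcon hq1neg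
    have hr10 : r₁ < 0 := hr₁₂.trans hr20
    have hr30 : r₃ < 0 := by
      by_contra h3
      push_neg at h3
      nlinarith [hs3, mul_nonneg (mul_pos (by linarith : (0:ℝ) < -r₁)
        (by linarith : (0:ℝ) < -r₂)).le h3]
    linarith [hs1]
  have hq2r3 : q₂ < r₃ := by
    by_contra hcon
    push_neg at hcon
    have hp12 : 0 < (q₂ - r₁) * (q₂ - r₂) := mul_pos (by linarith) (by linarith)
    nlinarith [hvq2, hp12, mul_nonneg hp12.le (by linarith : (0:ℝ) ≤ q₂ - r₃)]
  have hqpr : ((1 + lam - lam ^ 2) * (1 - lam)) * (1 - 2 * lam - lam ^ 2 + lam ^ 3)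
      = (q₁ - lam) * ((q₂ - lam) * ((1 - lam) * ((r₁ - lam) * ((r₂ - lam) * (r₃ - lam))))) := by
    rw [hqfact lam, hfact lam]; ring
  rw [hqpr]
  rcases lt_or_ge lam r₁ with hc1 | hge1
  · exact mul_pos (by linarith) (mul_pos (by linarith) (mul_pos (by linarith)
      (mul_pos (by linarith) (mul_pos (by linarith) (by linarith)))))
  · have h₁ : q₁ < lam := hm1 hge1
    rcases lt_or_ge lam r₂ with hc2 | hge2
    · have i5 : 0 < (r₂ - lam) * (r₃ - lam) := mul_pos (by linarith) (by linarith)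
      have i4 : (r₁ - lam) * ((r₂ - lam) * (r₃ - lam)) < 0 :=
        mul_neg_of_neg_of_pos (by linarith) i5
      have i3 : (1 - lam) * ((r₁ - lam) * ((r₂ - lam) * (r₃ - lam))) < 0 :=
        mul_neg_of_pos_of_neg (by linarith) i4
      have i2 : (q₂ - lam) * ((1 - lam) * ((r₁ - lam) * ((r₂ - lam) * (r₃ - lam)))) < 0 :=
        mul_neg_of_pos_of_neg (by linarith) i3
      exact mul_pos_of_neg_of_neg (by linarith) i2
    · have h₂ : 1 < lam := hm2 hge2
      rcases lt_or_ge lam q₂ with hc3 | hge3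
      · have i5 : (r₂ - lam) * (r₃ - lam) < 0 :=
          mul_neg_of_neg_of_pos (by linarith) (by linarith)
        have i4 : 0 < (r₁ - lam) * ((r₂ - lam) * (r₃ - lam)) :=
          mul_pos_of_neg_of_neg (by linarith) i5
        have i3 : (1 - lam) * ((r₁ - lam) * ((r₂ - lam) * (r₃ - lam))) < 0 :=
          mul_neg_of_neg_of_pos (by linarith) i4
        have i2 : (q₂ - lam) * ((1 - lam) * ((r₁ - lam) * ((r₂ - lam) * (r₃ - lam)))) < 0 :=
          mul_neg_of_pos_of_neg (by linarith) i3
        exact mul_pos_of_neg_of_neg (by linarith) i2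
      · have h₃ : r₃ < lam := hm3 hge3
        have i5 : 0 < (r₂ - lam) * (r₃ - lam) :=
          mul_pos_of_neg_of_neg (by linarith) (by linarith)
        have i4 : (r₁ - lam) * ((r₂ - lam) * (r₃ - lam)) < 0 :=
          mul_neg_of_neg_of_pos (by linarith) i5
        have i3 : 0 < (1 - lam) * ((r₁ - lam) * ((r₂ - lam) * (r₃ - lam))) :=
          mul_pos_of_neg_of_neg (by linarith) i4
        have i2 : (q₂ - lam) * ((1 - lam) * ((r₁ - lam) * ((r₂ - lam) * (r₃ - lam)))) < 0 :=
          mul_neg_of_neg_of_pos (by linarith) i3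
        exact mul_pos_of_neg_of_neg (by linarith) i2

private lemma stmt14_zero (α Q P R3 a b : ℝ) (hα : 0 < α) (ha : 0 ≤ a) (hb : 0 ≤ b)
    (hpos : 0 < (Q * P) * R3)
    (key : ((Q * P) * R3) * a + (α * (Q * R3) ^ 2) * b = 0) :
    a = 0 ∧ b = 0 := by
  have hQR : Q * R3 ≠ 0 := by
    intro h
    have h2 : (Q * P) * R3 = 0 := by linear_combination P * h
    exact absurd h2 (ne_of_gt hpos)
  have hsq : 0 < (Q * R3) ^ 2 := by positivity
  have ha0 : a = 0 := by
    have hle : a ≤ 0 := by nlinarith [mul_nonneg (mul_pos hα hsq).le hb]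
    linarith
  refine ⟨ha0, ?_⟩
  have hT : 0 < α * (Q * R3) ^ 2 := mul_pos hα hsq
  have : (α * (Q * R3) ^ 2) * b = 0 := by rw [ha0] at key; linarith
  have := mul_eq_zero.mp this
  rcases this with h | h
  · exact absurd h (ne_of_gt hT)
  · exact h


theorem stmt14
    {W U : Type*}
    [NormedAddCommGroup W] [InnerProductSpace ℝ W] [FiniteDimensional ℝ W]
    [NormedAddCommGroup U] [InnerProductSpace ℝ U] [FiniteDimensional ℝ U]
    (M Minv : W →ₗ[ℝ] W) (K : U →ₗ[ℝ] U) (A : U →ₗ[ℝ] W) (R : U →ₗ[ℝ] U)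
    (hMsym : ∀ x y : W, ⟪M x, y⟫ = ⟪x, M y⟫)
    (hMpos : ∀ x : W, x ≠ 0 → 0 < ⟪M x, x⟫)
    (hMinv : ∀ x : W, M (Minv x) = x)
    (hKsym : ∀ x y : U, ⟪K x, y⟫ = ⟪x, K y⟫)
    (hKpos : ∀ u : U, 0 ≤ ⟪K u, u⟫)
    (hR : R = (LinearMap.adjoint A).comp (Minv.comp A))
    (hKR : ∀ u : U, u ≠ 0 → 0 < ⟪K u + R u, u⟫)
    (q₁ q₂ r₁ r₂ r₃ : ℝ)
    (hq₁ : q₁ = (1 - Real.sqrt 5) / 2) (hq₂ : q₂ = (1 + Real.sqrt 5) / 2)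
    (hr₁₂ : r₁ < r₂) (hr₂₃ : r₂ < r₃)
    (hroot₁ : 1 - 2 * r₁ - r₁ ^ 2 + r₁ ^ 3 = 0)
    (hroot₂ : 1 - 2 * r₂ - r₂ ^ 2 + r₂ ^ 3 = 0)
    (hroot₃ : 1 - 2 * r₃ - r₃ ^ 2 + r₃ ^ 3 = 0)
    (α : ℝ) (hα : 0 < α)
    (lam : ℝ) (f : W) (u : U) (w : W)
    (hne : ¬(f = 0 ∧ u = 0 ∧ w = 0))
    (heq1 : α • M f + M w = (lam * α) • M f)
    (heq2 : K u + LinearMap.adjoint A w = lam • (K u + α • R u))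
    (heq3 : M f + A u = (lam * α⁻¹) • M w) :
    lam ∈ Set.Icc r₁ q₁ ∪ Set.Icc r₂ 1 ∪ Set.Icc q₂ r₃ := by
  by_contra hmem
  simp only [Set.mem_union, Set.mem_Icc, not_or, not_and, not_le] at hmem
  obtain ⟨⟨hm1, hm2⟩, hm3⟩ := hmem
  have hpos := stmt14_sign q₁ q₂ r₁ r₂ r₃ lam hq₁ hq₂ hr₁₂ hr₂₃ hroot₁ hroot₂ hroot₃ hm1 hm2 hm3
  -- operator algebra
  have hMinj : ∀ x : W, M x = 0 → x = 0 := by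
    intro x hx
    by_contra hx0
    have h := hMpos x hx0
    rw [hx] at h
    simp at h
  have hMw : M w = ((lam - 1) * α) • M f := by
    have h : M w = (lam * α) • M f - α • M f := by rw [← heq1]; abel
    rw [← sub_smul] at h
    rw [h]; congr 1; ring
  have hw : w = ((lam - 1) * α) • f := by
    have h : M (w - ((lam - 1) * α) • f) = 0 := by
      rw [map_sub, map_smul, hMw, sub_self]
    exact sub_eq_zero.mp (hMinj _ h)
  have hAu : A u = (lam ^ 2 - lam - 1) • M f := by
    have h : A u = (lam * α⁻¹) • M w - M f := by rw [← heq3]; abel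
    rw [hMw, smul_smul] at h
    rw [h]
    rw [show (lam ^ 2 - lam - 1 : ℝ) = lam * α⁻¹ * ((lam - 1) * α) - 1 by
      field_simp]
    rw [sub_smul, one_smul]
  have hMinvM : ∀ x : W, Minv (M x) = x := by
    intro x
    have h : M (Minv (M x) - x) = 0 := by rw [map_sub, hMinv, sub_self]
    exact sub_eq_zero.mp (hMinj _ h)
  have hRu : R u = (lam ^ 2 - lam - 1) • (LinearMap.adjoint A) f := by
    rw [hR]
    simp only [LinearMap.comp_apply]
    rw [hAu, map_smul, hMinvM, map_smul]
  -- pass to scalar equations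
  have e2 := congrArg (fun v : U => ⟪v, u⟫) heq2
  simp only [inner_add_left, real_inner_smul_left] at e2
  have eAw : ⟪(LinearMap.adjoint A) w, u⟫
      = ((lam - 1) * α) * ((lam ^ 2 - lam - 1) * ⟪M f, f⟫) := by
    rw [LinearMap.adjoint_inner_left, hw, real_inner_smul_left, hAu,
      real_inner_smul_right, real_inner_comm f (M f)]
  have eR : ⟪R u, u⟫ = (lam ^ 2 - lam - 1) * ((lam ^ 2 - lam - 1) * ⟪M f, f⟫) := by
    rw [hRu, real_inner_smul_left, LinearMap.adjoint_inner_left, hAu,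
      real_inner_smul_right, real_inner_comm f (M f)]
  rw [eAw, eR] at e2
  have h0 : (1 - lam) * ⟪K u, u⟫
      = (α * (lam ^ 2 - lam - 1) * (1 - 2 * lam - lam ^ 2 + lam ^ 3)) * ⟪M f, f⟫ := by
    linear_combination e2
  have key : (((1 + lam - lam ^ 2) * (1 - lam)) * (1 - 2 * lam - lam ^ 2 + lam ^ 3)) * ⟪K u, u⟫
      + (α * ((1 + lam - lam ^ 2) * (1 - 2 * lam - lam ^ 2 + lam ^ 3)) ^ 2) * ⟪M f, f⟫ = 0 := by
    linear_combination ((1 + lam - lam ^ 2) * (1 - 2 * lam - lam ^ 2 + lam ^ 3)) * h0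
  have ha : 0 ≤ ⟪K u, u⟫ := hKpos u
  have hb : 0 ≤ ⟪M f, f⟫ := by
    rcases eq_or_ne f 0 with h | h
    · simp [h]
    · exact (hMpos f h).le
  obtain ⟨ha0, hb0⟩ := stmt14_zero α (1 + lam - lam ^ 2) (1 - lam)
    (1 - 2 * lam - lam ^ 2 + lam ^ 3) ⟪K u, u⟫ ⟪M f, f⟫ hα ha hb hpos key
  have hf0 : f = 0 := by
    by_contra hf
    exact absurd hb0 (ne_of_gt (hMpos f hf))
  have hu0 : u = 0 := by
    by_contra hu
    have hRu0 : R u = 0 := by rw [hRu, hf0, map_zero, smul_zero]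
    have h := hKR u hu
    rw [hRu0, add_zero, ha0] at h
    exact lt_irrefl 0 h
  have hw0 : w = 0 := by rw [hw, hf0, smul_zero]
  exact hne ⟨hf0, hu0, hw0⟩
end

section
/- Under the hypotheses of the eigenvalue localization theorem, the spectral condition number of B_α A_α satisfies κ(B_α A_α) ≤ r₃/r₂ (≈ 4.089), uniformly in α > 0, where r₂ and r₃ are the middle and largest roots of r(λ) = (1−λ) − λ(1 + λ − λ²). Moreover, if K has a nontrivial kernel, then the roots of r are eigenvalues of B_α A_α and the bound is attained. -/
/-!
Since `M` is injective, the first and third rows of the eigenproblem force `w = α(λ - 1) f` and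
`A u = (λ² - λ - 1) M f`; testing the second row with `u` then gives
`(1 - λ) ⟪K u, u⟫ = α ⟪M f, f⟫ (λ² - λ - 1) r(λ)`. As `⟪K u, u⟫ ≥ 0`, the sextic
`(1 - λ)(λ² - λ - 1) r(λ)` is nonnegative at `λ` (for `f = 0`, positivity of `K + R` forces `λ = 1`),
which confines `λ` to `[r₁, (1 - √5)/2] ∪ [r₂, 1] ∪ [(1 + √5)/2, r₃]`; rational enclosures of the
roots show that all these points have modulus in `[r₂, r₃]`. If `K u₀ = 0`, the second row holds
for every `λ`, and the elimination can be run backwards at a root of `r`.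
-/

open scoped RealInnerProductSpace

/-- The paper's `r(λ) = (1 - λ) - λ(1 + λ - λ²)`, expanded. -/
def rPoly (x : ℝ) : ℝ := 1 - 2 * x - x ^ 2 + x ^ 3

lemma rPoly_sub_rPoly (x y : ℝ) :
    rPoly x - rPoly y = (x - y) * (x ^ 2 + x * y + y ^ 2 - x - y - 2) := by
  unfold rPoly; ring

lemma rPoly_root_cases {x : ℝ} (hx : rPoly x = 0) :
    x < -1.24 ∨ (0.444 < x ∧ x < 0.45) ∨ (1.8 < x ∧ x < 1.803) := by
  unfold rPoly at hx
  rcases lt_or_ge x (-1.24) with h₁ | h₁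
  · exact Or.inl h₁
  rcases lt_or_ge x 0.45 with h₂ | h₂
  · exact Or.inr (Or.inl ⟨by nlinarith [sq_nonneg (x - 0.444), sq_nonneg x, sq_nonneg (x + 0.4)], h₂⟩)
  refine Or.inr (Or.inr ⟨?_, by nlinarith [sq_nonneg (x - 2)]⟩)
  by_contra! h₃
  nlinarith [mul_nonneg (mul_nonneg (sub_nonneg.2 h₂) (sub_nonneg.2 h₃)) (sub_nonneg.2 h₂)]

/-- On each interval of `rPoly_root_cases` the quadratic factor of `rPoly_sub_rPoly` has a sign,
so distinct roots lie in distinct intervals. -/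
lemma rPoly_roots_of_lt {s t : ℝ} (hs : rPoly s = 0) (ht : rPoly t = 0) (hst : s < t) :
    (s < -1.24 ∧ 0.444 < t) ∨ (s < 0.45 ∧ 1.8 < t) := by
  have hq : s ^ 2 + s * t + t ^ 2 - s - t - 2 = 0 := by
    have h := rPoly_sub_rPoly s t
    rw [hs, ht, sub_zero, eq_comm, mul_eq_zero] at h
    exact h.resolve_left (sub_ne_zero.2 hst.ne)
  rcases rPoly_root_cases hs with hs' | hs' | hs' <;>
    rcases rPoly_root_cases ht with ht' | ht' | ht'
  all_goals first
    | (left; constructor <;> linarith)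
    | (right; constructor <;> linarith)
    | (exfalso; nlinarith)

lemma rPoly_middle_largest_root_bounds {r₁ r₂ r₃ : ℝ} (hr₁₂ : r₁ < r₂) (hr₂₃ : r₂ < r₃)
    (hroot₁ : rPoly r₁ = 0) (hroot₂ : rPoly r₂ = 0) (hroot₃ : rPoly r₃ = 0) :
    0.444 < r₂ ∧ r₂ < 0.45 ∧ 1.8 < r₃ ∧ r₃ < 1.803 := by
  have h₂ : 0.444 < r₂ := by
    rcases rPoly_roots_of_lt hroot₁ hroot₂ hr₁₂ with h | h <;> linarith
  have h₃ : r₂ < 0.45 ∧ 1.8 < r₃ := by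
    rcases rPoly_roots_of_lt hroot₂ hroot₃ hr₂₃ with h | h
    · linarith
    · exact h
  have h₄ : r₃ < 1.803 := by
    rcases rPoly_root_cases hroot₃ with h | h | h <;> linarith
  exact ⟨h₂, h₃.1, h₃.2, h₄⟩

lemma abs_bounds_of_sign_nonneg {r₂ r₃ lam : ℝ} (hr₂ : r₂ < 0.45) (hr₃ : 1.8 < r₃)
    (hroot₂ : rPoly r₂ = 0) (hroot₃ : rPoly r₃ = 0)
    (h : 0 ≤ (1 - lam) * (lam ^ 2 - lam - 1) * rPoly lam) :
    r₂ ≤ |lam| ∧ |lam| ≤ r₃ := by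
  constructor
  · by_contra! hlt
    obtain ⟨hlo, hhi⟩ := abs_lt.1 hlt
    have hp : 0 < rPoly lam := by
      have hq : lam ^ 2 + lam * r₂ + r₂ ^ 2 - lam - r₂ - 2 < 0 := by nlinarith
      nlinarith [rPoly_sub_rPoly lam r₂, mul_pos (sub_pos.2 hhi) (neg_pos.2 hq)]
    have hc : lam ^ 2 - lam - 1 < 0 := by nlinarith
    nlinarith [mul_pos (mul_pos (by linarith : (0:ℝ) < 1 - lam) (neg_pos.2 hc)) hp]
  · by_contra! hlt
    rcases lt_abs.1 hlt with hgt | hgt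
    · have hp : 0 < rPoly lam := by
        have hq : 0 < lam ^ 2 + lam * r₃ + r₃ ^ 2 - lam - r₃ - 2 := by
          nlinarith [mul_pos (by linarith : (0:ℝ) < lam - 1.8) (by linarith : (0:ℝ) < r₃ - 1.8)]
        nlinarith [rPoly_sub_rPoly lam r₃, mul_pos (sub_pos.2 hgt) hq]
      have hc : 0 < lam ^ 2 - lam - 1 := by nlinarith
      nlinarith [mul_pos (mul_pos (by linarith : (0:ℝ) < lam - 1) hc) hp]
    · have hp : rPoly lam < 0 := by
        unfold rPoly; nlinarith [sq_nonneg (lam + 1.8)]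
      have hc : 0 < lam ^ 2 - lam - 1 := by nlinarith
      nlinarith [mul_pos (mul_pos (by linarith : (0:ℝ) < 1 - lam) hc) (neg_pos.2 hp)]

lemma LinearMap.injective_of_inner_pos {E : Type*} [NormedAddCommGroup E] [InnerProductSpace ℝ E]
    {T : E →ₗ[ℝ] E} (hT : ∀ x : E, x ≠ 0 → 0 < ⟪T x, x⟫) : Function.Injective T := by
  refine (injective_iff_map_eq_zero T).2 fun x hx => ?_
  by_contra h
  simpa [hx] using hT x h

section GeneralizedEigenproblem

variable {W U : Type*} [NormedAddCommGroup W] [InnerProductSpace ℝ W]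
  [NormedAddCommGroup U] [InnerProductSpace ℝ U]
  {M Minv : W →ₗ[ℝ] W} {K : U →ₗ[ℝ] U} {A : U →ₗ[ℝ] W} {α lam : ℝ}

lemma eq_smul_of_first_row (hM : Function.Injective M) {f w : W}
    (H₁ : α • M f + M w = (lam * α) • M f) : w = (α * (lam - 1)) • f := by
  apply hM
  rw [map_smul, eq_sub_of_add_eq' H₁]
  match_scalars
  ring

lemma apply_eq_smul_of_third_row (hα : α ≠ 0) {f : W} {u : U}
    (H₃ : M f + A u = (lam * α⁻¹) • M ((α * (lam - 1)) • f)) :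
    A u = (lam ^ 2 - lam - 1) • M f := by
  rw [eq_sub_of_add_eq' H₃, map_smul, smul_smul]
  match_scalars
  field_simp

variable [FiniteDimensional ℝ W] [FiniteDimensional ℝ U]

lemma second_row_inner_eq (hMinv : ∀ x : W, M (Minv x) = x) (hM : Function.Injective M)
    {f : W} {u : U} (hAu : A u = (lam ^ 2 - lam - 1) • M f)
    (H₂ : K u + LinearMap.adjoint A ((α * (lam - 1)) • f)
      = lam • (K u + α • (LinearMap.adjoint A) (Minv (A u)))) :
    (1 - lam) * ⟪K u, u⟫ = α * ⟪M f, f⟫ * ((lam ^ 2 - lam - 1) * rPoly lam) := by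
  have hMinvAu : Minv (A u) = (lam ^ 2 - lam - 1) • f := hM (by rw [hMinv, hAu, map_smul])
  rw [hMinvAu] at H₂
  have h := congrArg (⟪·, u⟫) H₂
  simp only [inner_add_left, real_inner_smul_left, LinearMap.adjoint_inner_left, map_smul, hAu,
    real_inner_smul_right, real_inner_comm (M f) f] at h
  unfold rPoly
  linear_combination h

lemma sign_nonneg_of_eigentriple {R : U →ₗ[ℝ] U} (hMpos : ∀ x : W, x ≠ 0 → 0 < ⟪M x, x⟫)
    (hMinv : ∀ x : W, M (Minv x) = x) (hKpos : ∀ u : U, 0 ≤ ⟪K u, u⟫)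
    (hR : R = (LinearMap.adjoint A).comp (Minv.comp A))
    (hKR : ∀ u : U, u ≠ 0 → 0 < ⟪K u + R u, u⟫) (hα : 0 < α) {f w : W} {u : U}
    (hnt : ¬(f = 0 ∧ u = 0 ∧ w = 0))
    (H₁ : α • M f + M w = (lam * α) • M f)
    (H₂ : K u + LinearMap.adjoint A w = lam • (K u + α • R u))
    (H₃ : M f + A u = (lam * α⁻¹) • M w) :
    0 ≤ (1 - lam) * (lam ^ 2 - lam - 1) * rPoly lam := by
  subst hR
  have hM := LinearMap.injective_of_inner_pos hMpos
  obtain rfl := eq_smul_of_first_row hM H₁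
  have hAu := apply_eq_smul_of_third_row hα.ne' H₃
  have hE := second_row_inner_eq hMinv hM hAu H₂
  by_cases hf : f = 0
  · subst hf
    have hu : u ≠ 0 := fun hu => hnt ⟨rfl, hu, smul_zero _⟩
    have hk : 0 < ⟪K u, u⟫ := by
      simpa [hAu, (LinearMap.map_eq_zero_iff M hM).1 (hMinv 0)] using hKR u hu
    have hlam : lam = 1 := by
      simp only [map_zero, inner_zero_left, mul_zero, zero_mul] at hE
      linarith [(mul_eq_zero.1 hE).resolve_right hk.ne']
    simp [hlam]
  · have hm : 0 < α * ⟪M f, f⟫ := mul_pos hα (hMpos f hf)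
    refine (mul_nonneg_iff_of_pos_left hm).1 ?_
    calc (0 : ℝ) ≤ (1 - lam) ^ 2 * ⟪K u, u⟫ := mul_nonneg (sq_nonneg _) (hKpos u)
      _ = _ := by linear_combination (1 - lam) * hE

lemma exists_eigentriple_of_ker {R : U →ₗ[ℝ] U} (hMinv : ∀ x : W, M (Minv x) = x)
    (hR : R = (LinearMap.adjoint A).comp (Minv.comp A)) (hα : α ≠ 0)
    {u₀ : U} (hu₀ : u₀ ≠ 0) (hKu₀ : K u₀ = 0) (hlam : rPoly lam = 0) :
    ∃ (f : W) (u : U) (w : W), ¬(f = 0 ∧ u = 0 ∧ w = 0) ∧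
      α • M f + M w = (lam * α) • M f ∧
      K u + LinearMap.adjoint A w = lam • (K u + α • R u) ∧
      M f + A u = (lam * α⁻¹) • M w := by
  subst hR
  have hc : lam * (lam - 1) - 1 ≠ 0 := by
    intro hc
    have hlam1 : lam = 1 := by unfold rPoly at hlam; linear_combination -hlam + lam * hc
    rw [hlam1] at hc
    norm_num at hc
  refine ⟨(lam * (lam - 1) - 1)⁻¹ • Minv (A u₀), u₀,
    (α * (lam - 1) * (lam * (lam - 1) - 1)⁻¹) • Minv (A u₀), fun h => hu₀ h.2.1, ?_, ?_, ?_⟩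
  · simp only [map_smul, hMinv, smul_smul]
    match_scalars
    field_simp
    ring
  · simp only [LinearMap.comp_apply, map_smul, hKu₀, zero_add, smul_smul]
    match_scalars
    unfold rPoly at hlam
    field_simp
    linear_combination -hlam
  · simp only [map_smul, hMinv, smul_smul]
    match_scalars
    field_simp
    ring

end GeneralizedEigenproblem

theorem stmt15_general
    {W U : Type*}
    [NormedAddCommGroup W] [InnerProductSpace ℝ W] [FiniteDimensional ℝ W]
    [NormedAddCommGroup U] [InnerProductSpace ℝ U] [FiniteDimensional ℝ U]
    (M Minv : W →ₗ[ℝ] W) (K : U →ₗ[ℝ] U) (A : U →ₗ[ℝ] W) (R : U →ₗ[ℝ] U)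
    (hMpos : ∀ x : W, x ≠ 0 → 0 < ⟪M x, x⟫)
    (hMinv : ∀ x : W, M (Minv x) = x)
    (hKpos : ∀ u : U, 0 ≤ ⟪K u, u⟫)
    (hR : R = (LinearMap.adjoint A).comp (Minv.comp A))
    (hKR : ∀ u : U, u ≠ 0 → 0 < ⟪K u + R u, u⟫)
    (r₁ r₂ r₃ : ℝ) (hr₁₂ : r₁ < r₂) (hr₂₃ : r₂ < r₃)
    (hroot₁ : 1 - 2 * r₁ - r₁ ^ 2 + r₁ ^ 3 = 0)
    (hroot₂ : 1 - 2 * r₂ - r₂ ^ 2 + r₂ ^ 3 = 0)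
    (hroot₃ : 1 - 2 * r₃ - r₃ ^ 2 + r₃ ^ 3 = 0)
    (α : ℝ) (hα : 0 < α) :
    (∀ (lam : ℝ) (f : W) (u : U) (w : W), ¬(f = 0 ∧ u = 0 ∧ w = 0) →
        α • M f + M w = (lam * α) • M f →
        K u + LinearMap.adjoint A w = lam • (K u + α • R u) →
        M f + A u = (lam * α⁻¹) • M w →
        r₂ ≤ |lam| ∧ |lam| ≤ r₃) ∧
    r₃ / r₂ < 4.09 ∧
    ((∃ u₀ : U, u₀ ≠ 0 ∧ K u₀ = 0) →
      ∀ lam : ℝ, 1 - 2 * lam - lam ^ 2 + lam ^ 3 = 0 →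
        ∃ (f : W) (u : U) (w : W), ¬(f = 0 ∧ u = 0 ∧ w = 0) ∧
          α • M f + M w = (lam * α) • M f ∧
          K u + LinearMap.adjoint A w = lam • (K u + α • R u) ∧
          M f + A u = (lam * α⁻¹) • M w) := by
  obtain ⟨hr₂, hr₂', hr₃, hr₃'⟩ :=
    rPoly_middle_largest_root_bounds hr₁₂ hr₂₃ hroot₁ hroot₂ hroot₃
  refine ⟨fun lam f u w hnt H₁ H₂ H₃ => ?_, ?_, ?_⟩
  · exact abs_bounds_of_sign_nonneg hr₂' hr₃ hroot₂ hroot₃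
      (sign_nonneg_of_eigentriple hMpos hMinv hKpos hR hKR hα hnt H₁ H₂ H₃)
  · rw [div_lt_iff₀ (by linarith)]
    linarith
  · rintro ⟨u₀, hu₀, hKu₀⟩ lam hlam
    exact exists_eigentriple_of_ker hMinv hR hα.ne' hu₀ hKu₀ hlam

theorem stmt15
    {W U : Type*}
    [NormedAddCommGroup W] [InnerProductSpace ℝ W] [FiniteDimensional ℝ W]
    [NormedAddCommGroup U] [InnerProductSpace ℝ U] [FiniteDimensional ℝ U]
    (M Minv : W →ₗ[ℝ] W) (K : U →ₗ[ℝ] U) (A : U →ₗ[ℝ] W) (R : U →ₗ[ℝ] U)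
    (hMsym : ∀ x y : W, ⟪M x, y⟫ = ⟪x, M y⟫)
    (hMpos : ∀ x : W, x ≠ 0 → 0 < ⟪M x, x⟫)
    (hMinv : ∀ x : W, M (Minv x) = x)
    (hKsym : ∀ x y : U, ⟪K x, y⟫ = ⟪x, K y⟫)
    (hKpos : ∀ u : U, 0 ≤ ⟪K u, u⟫)
    (hR : R = (LinearMap.adjoint A).comp (Minv.comp A))
    (hKR : ∀ u : U, u ≠ 0 → 0 < ⟪K u + R u, u⟫)
    (r₁ r₂ r₃ : ℝ) (hr₁₂ : r₁ < r₂) (hr₂₃ : r₂ < r₃)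
    (hroot₁ : 1 - 2 * r₁ - r₁ ^ 2 + r₁ ^ 3 = 0)
    (hroot₂ : 1 - 2 * r₂ - r₂ ^ 2 + r₂ ^ 3 = 0)
    (hroot₃ : 1 - 2 * r₃ - r₃ ^ 2 + r₃ ^ 3 = 0)
    (α : ℝ) (hα : 0 < α) :
    (∀ (lam : ℝ) (f : W) (u : U) (w : W), ¬(f = 0 ∧ u = 0 ∧ w = 0) →
        α • M f + M w = (lam * α) • M f →
        K u + LinearMap.adjoint A w = lam • (K u + α • R u) →
        M f + A u = (lam * α⁻¹) • M w →
        r₂ ≤ |lam| ∧ |lam| ≤ r₃) ∧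
    r₃ / r₂ < 4.09 ∧
    ((∃ u₀ : U, u₀ ≠ 0 ∧ K u₀ = 0) →
      ∀ lam : ℝ, 1 - 2 * lam - lam ^ 2 + lam ^ 3 = 0 →
        ∃ (f : W) (u : U) (w : W), ¬(f = 0 ∧ u = 0 ∧ w = 0) ∧
          α • M f + M w = (lam * α) • M f ∧
          K u + LinearMap.adjoint A w = lam • (K u + α • R u) ∧
          M f + A u = (lam * α⁻¹) • M w) :=
  stmt15_general M Minv K A R hMpos hMinv hKpos hR hKR r₁ r₂ r₃ hr₁₂ hr₂₃ hroot₁ hroot₂ hroot₃ α hα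
end

section
/- The polynomial r(λ) = 1 − 2λ − λ² + λ³ has exactly three real roots r₁ < r₂ < r₃ with r₁ < 0 < r₂ < 1 < r₃, and r₃/r₂ < 4.09. Moreover, the roots q₁ = (1−√5)/2 and q₂ = (1+√5)/2 of q(λ) = 1 + λ − λ² satisfy r₁ < q₁ < 0 and 1 < q₂ < r₃. -/
/-!
STATEMENT 19: root structure of r(λ) = 1 - 2λ - λ² + λ³ and interlacing with
the roots q₁ = (1-√5)/2, q₂ = (1+√5)/2 of q(λ) = 1 + λ - λ²:
r has exactly three real roots r₁ < r₂ < r₃ with r₁ < 0 < r₂ < 1 < r₃,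
r₃/r₂ < 4.09, r₁ < q₁ < 0 and 1 < q₂ < r₃.
-/

private lemma cubic_cont : Continuous (fun x : ℝ => 1 - 2 * x - x ^ 2 + x ^ 3) := by
  continuity

private lemma root_in (lo hi : ℝ) (hle : lo ≤ hi)
    (h1 : 1 - 2 * lo - lo ^ 2 + lo ^ 3 < 0) (h2 : 0 < 1 - 2 * hi - hi ^ 2 + hi ^ 3) :
    ∃ x ∈ Set.Ioo lo hi, 1 - 2 * x - x ^ 2 + x ^ 3 = 0 := by
  have := intermediate_value_Ioo hle (cubic_cont.continuousOn)
  have h0 : (0 : ℝ) ∈ Set.Ioo (1 - 2 * lo - lo ^ 2 + lo ^ 3) (1 - 2 * hi - hi ^ 2 + hi ^ 3) :=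
    ⟨h1, h2⟩
  obtain ⟨x, hx, hfx⟩ := this h0
  exact ⟨x, hx, hfx⟩

private lemma root_in' (lo hi : ℝ) (hle : lo ≤ hi)
    (h1 : 0 < 1 - 2 * lo - lo ^ 2 + lo ^ 3) (h2 : 1 - 2 * hi - hi ^ 2 + hi ^ 3 < 0) :
    ∃ x ∈ Set.Ioo lo hi, 1 - 2 * x - x ^ 2 + x ^ 3 = 0 := by
  have := intermediate_value_Ioo' hle (cubic_cont.continuousOn)
  have h0 : (0 : ℝ) ∈ Set.Ioo (1 - 2 * hi - hi ^ 2 + hi ^ 3) (1 - 2 * lo - lo ^ 2 + lo ^ 3) :=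
    ⟨h2, h1⟩
  obtain ⟨x, hx, hfx⟩ := this h0
  exact ⟨x, hx, hfx⟩

private lemma sqrt5_lt : Real.sqrt 5 < 2.4 := by
  nlinarith [Real.sq_sqrt (by norm_num : (5:ℝ) ≥ 0), Real.sqrt_nonneg 5]

private lemma sqrt5_gt : 1 < Real.sqrt 5 := by
  nlinarith [Real.sq_sqrt (by norm_num : (5:ℝ) ≥ 0), Real.sqrt_nonneg 5]

theorem stmt19 :
    ∃ r₁ r₂ r₃ : ℝ, r₁ < r₂ ∧ r₂ < r₃ ∧
      (∀ lam : ℝ, 1 - 2 * lam - lam ^ 2 + lam ^ 3 = 0 ↔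
        lam = r₁ ∨ lam = r₂ ∨ lam = r₃) ∧
      r₁ < 0 ∧ 0 < r₂ ∧ r₂ < 1 ∧ 1 < r₃ ∧
      r₃ / r₂ < 4.09 ∧
      r₁ < (1 - Real.sqrt 5) / 2 ∧ (1 - Real.sqrt 5) / 2 < 0 ∧
      1 < (1 + Real.sqrt 5) / 2 ∧ (1 + Real.sqrt 5) / 2 < r₃ := by
  obtain ⟨a, ⟨ha1, ha2⟩, ha⟩ := root_in (-2) (-1) (by norm_num) (by norm_num) (by norm_num)
  obtain ⟨b, ⟨hb1, hb2⟩, hb⟩ := root_in' (0.4449) (0.5) (by norm_num) (by norm_num) (by norm_num)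
  obtain ⟨c, ⟨hc1, hc2⟩, hc⟩ := root_in (1.7) (1.81) (by norm_num) (by norm_num) (by norm_num)
  have hab : a < b := by linarith
  have hbc : b < c := by linarith
  have hac : a < c := by linarith
  -- elementary symmetric relations
  have hEab : a ^ 2 + a * b + b ^ 2 - a - b - 2 = 0 := by
    have h : (a - b) * (a ^ 2 + a * b + b ^ 2 - a - b - 2) = 0 := by
      linear_combination ha - hb
    exact (mul_eq_zero.mp h).resolve_left (sub_ne_zero_of_ne (ne_of_lt hab))
  have hEbc : b ^ 2 + b * c + c ^ 2 - b - c - 2 = 0 := by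
    have h : (b - c) * (b ^ 2 + b * c + c ^ 2 - b - c - 2) = 0 := by
      linear_combination hb - hc
    exact (mul_eq_zero.mp h).resolve_left (sub_ne_zero_of_ne (ne_of_lt hbc))
  have he1 : a + b + c = 1 := by
    have h : (a - c) * (a + b + c - 1) = 0 := by
      linear_combination hEab - hEbc
    have := (mul_eq_zero.mp h).resolve_left (sub_ne_zero_of_ne (ne_of_lt hac))
    linarith
  have he2 : a * b + a * c + b * c = -2 := by
    linear_combination (b + c) * he1 - hEbc
  have habc : a * b = c ^ 2 - c - 2 := by
    linear_combination he2 - c * he1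
  have he3 : a * b * c = -1 := by
    have : a * b * c = (c ^ 2 - c - 2) * c := by rw [habc]
    rw [this]; linear_combination hc
  refine ⟨a, b, c, hab, hbc, ?_, by linarith, by linarith, by linarith, by linarith, ?_, ?_, ?_, ?_, ?_⟩
  · intro lam
    constructor
    · intro hlam
      have key : (lam - a) * ((lam - b) * (lam - c)) = 0 := by
        linear_combination hlam - lam ^ 2 * he1 + lam * he2 - he3
      rcases mul_eq_zero.mp key with h | h
      · left; linarith [sub_eq_zero.mp h]
      · rcases mul_eq_zero.mp h with h | h
        · right; left; linarith [sub_eq_zero.mp h]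
        · right; right; linarith [sub_eq_zero.mp h]
    · rintro (rfl | rfl | rfl) <;> assumption
  · rw [div_lt_iff₀ (by linarith)]
    nlinarith
  · have := sqrt5_lt; linarith
  · have := sqrt5_gt; linarith
  · have := sqrt5_gt; linarith
  · have := sqrt5_lt; linarith
end
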